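/- arXiv:1307.3272 — 4 statements merged into one kernel-verified Lean document; each statement's English description precedes it below -/
import Mathlib

section
/- Let q and q' be two sets in R^d with max(diam(q), diam(q')) ≤ ε·d(q,q'), where d(q,q') is the infimum distance between q and q'. Then for any closed ball B (of radius r and center c) that contains at least one point of q and one point of q', all of q and all of q' are contained in the ball of radius (1+2ε)·r centered at c. -/
/-!
Let `x₀ ∈ q` and `y₀ ∈ q'` lie in `B`. Then `d(q, q') ≤ dist x₀ y₀ ≤ 2r`, so both diameters are at
most `2εr`, and every point of `q` (resp. `q'`) is within `2εr` of `x₀` (resp. `y₀`), hence within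
`(1 + 2ε) r` of `c`.
-/

open Metric

variable {α : Type*} [PseudoMetricSpace α]

theorem sInf_dist_le_dist {q q' : Set α} {x y : α} (hx : x ∈ q) (hy : y ∈ q') :
    sInf {t : ℝ | ∃ x ∈ q, ∃ y ∈ q', t = dist x y} ≤ dist x y :=
  csInf_le ⟨0, by rintro t ⟨x, -, y, -, rfl⟩; exact dist_nonneg⟩ ⟨x, hx, y, hy, rfl⟩

theorem subset_closedBall_of_diam_le {s : Set α} (hs : Bornology.IsBounded s) {x c : α}
    {r δ : ℝ} (hx : x ∈ s) (hxc : dist x c ≤ r) (hδ : diam s ≤ δ) :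
    s ⊆ closedBall c (δ + r) := fun z hz =>
  calc dist z c ≤ dist z x + dist x c := dist_triangle _ _ _
    _ ≤ δ + r := add_le_add ((dist_le_diam_of_mem hs hz hx).trans hδ) hxc

theorem wspd_expansion_covers_general
    (d : ℕ) (q q' : Set (EuclideanSpace ℝ (Fin d)))
    (hbq : Bornology.IsBounded q) (hbq' : Bornology.IsBounded q')
    (ε : ℝ) (hε : 0 < ε)
    (hsep : max (Metric.diam q) (Metric.diam q')
      ≤ ε * sInf {t : ℝ | ∃ x ∈ q, ∃ y ∈ q', t = dist x y})
    (c : EuclideanSpace ℝ (Fin d)) (r : ℝ)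
    (hqB : (q ∩ Metric.closedBall c r).Nonempty)
    (hq'B : (q' ∩ Metric.closedBall c r).Nonempty) :
    q ∪ q' ⊆ Metric.closedBall c ((1 + 2 * ε) * r) := by
  obtain ⟨x₀, hx₀q, hx₀B⟩ := hqB
  obtain ⟨y₀, hy₀q', hy₀B⟩ := hq'B
  rw [mem_closedBall] at hx₀B hy₀B
  have hsep_le : sInf {t : ℝ | ∃ x ∈ q, ∃ y ∈ q', t = dist x y} ≤ 2 * r :=
    calc _ ≤ dist x₀ y₀ := sInf_dist_le_dist hx₀q hy₀q'
      _ ≤ dist x₀ c + dist y₀ c := dist_triangle_right _ _ _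
      _ ≤ 2 * r := by linarith
  have hdiam : max (diam q) (diam q') ≤ 2 * ε * r := by
    linarith [mul_le_mul_of_nonneg_left hsep_le hε.le]
  rw [show (1 + 2 * ε) * r = 2 * ε * r + r by ring]
  exact Set.union_subset
    (subset_closedBall_of_diam_le hbq hx₀q hx₀B ((le_max_left _ _).trans hdiam))
    (subset_closedBall_of_diam_le hbq' hy₀q' hy₀B ((le_max_right _ _).trans hdiam))

theorem wspd_expansion_covers
    (d : ℕ) (q q' : Set (EuclideanSpace ℝ (Fin d)))
    (hq : q.Nonempty) (hq' : q'.Nonempty)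
    (hbq : Bornology.IsBounded q) (hbq' : Bornology.IsBounded q')
    (ε : ℝ) (hε : 0 < ε)
    (hsep : max (Metric.diam q) (Metric.diam q')
      ≤ ε * sInf {t : ℝ | ∃ x ∈ q, ∃ y ∈ q', t = dist x y})
    (c : EuclideanSpace ℝ (Fin d)) (r : ℝ)
    (hqB : (q ∩ Metric.closedBall c r).Nonempty)
    (hq'B : (q' ∩ Metric.closedBall c r).Nonempty) :
    q ∪ q' ⊆ Metric.closedBall c ((1 + 2 * ε) * r) :=
  wspd_expansion_covers_general d q q' hbq hbq' ε hε hsep c r hqB hq'B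
end

section
/- Vietoris–Rips Lemma: for a finite point set S ⊆ R^d and α ≥ 0, if σ ⊆ S satisfies diam(σ) ≤ 2α (i.e., every pair of points in σ is within distance 2α), then the circumradius of σ is at most √2·α; hence R_{2α}(S) ⊆ C_{√2·α}(S). -/
/-!
Let `c` minimise the largest distance `r` from a point to `σ`, and let `q ∈ σ` be at distance `r`
from `c`. Minimality forces some `p ∈ σ` at distance `r` with `⟪p - c, q - c⟫ ≤ 0`: otherwise moving
`c` slightly towards `q` would bring every point of `σ` strictly closer than `r`. For such `p`,
`2 r² ≤ dist p q ² ≤ (2α)²`, i.e. `r ≤ √2 α`.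
-/

noncomputable def rad {d : ℕ} (S : Set (EuclideanSpace ℝ (Fin d))) : ℝ :=
  ⨅ x : EuclideanSpace ℝ (Fin d), sSup ((fun p => dist p x) '' S)

open Filter Topology RealInnerProductSpace Finset

lemma exists_forall_sup'_dist_le {X : Type*} [PseudoMetricSpace X] [ProperSpace X]
    (σ : Finset X) (hσ : σ.Nonempty) :
    ∃ c, ∀ x, σ.sup' hσ (dist · c) ≤ σ.sup' hσ (dist · x) := by
  obtain ⟨p₀, hp₀⟩ := hσ
  have : Nonempty X := ⟨p₀⟩
  refine Continuous.exists_forall_le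
    (Continuous.finset_sup'_apply _ fun p _ => continuous_const.dist continuous_id) ?_
  exact tendsto_atTop_mono (fun x => by simpa [dist_comm] using le_sup' (dist · x) hp₀)
    (tendsto_dist_left_cocompact_atTop p₀)

section InnerProductSpace

variable {E : Type*} [NormedAddCommGroup E] [InnerProductSpace ℝ E]

lemma dist_sq_add_dist_sq_le_of_inner_nonpos {p q c : E} (h : ⟪p - c, q - c⟫ ≤ 0) :
    dist p c ^ 2 + dist q c ^ 2 ≤ dist p q ^ 2 := by
  rw [dist_eq_norm p q, ← sub_sub_sub_cancel_right p q c, norm_sub_sq_real, dist_eq_norm,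
    dist_eq_norm]
  linarith

lemma eventually_dist_add_smul_lt_of_dist_lt {p c : E} {r : ℝ} (v : E) (hp : dist p c < r) :
    ∀ᶠ t in 𝓝 (0 : ℝ), dist p (c + t • v) < r := by
  have hmove : Tendsto (fun t : ℝ => c + t • v) (𝓝 0) (𝓝 c) := by
    simpa using (show Continuous fun t : ℝ => c + t • v by fun_prop).tendsto 0
  exact (tendsto_const_nhds.dist hmove).eventually_lt_const hp

lemma eventually_dist_add_smul_lt_of_inner_pos {p c v : E} {r : ℝ} (hp : dist p c ≤ r)
    (hv : 0 < ⟪p - c, v⟫) : ∀ᶠ t in 𝓝[>] (0 : ℝ), dist p (c + t • v) < r := by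
  have hsmall : ∀ᶠ t in 𝓝 (0 : ℝ), t * ‖v‖ ^ 2 < 2 * ⟪p - c, v⟫ :=
    ((continuous_id.mul continuous_const).tendsto' 0 0 (zero_mul _)).eventually_lt_const
      (by linarith)
  filter_upwards [nhdsWithin_le_nhds hsmall, self_mem_nhdsWithin] with t ht (htpos : 0 < t)
  have hexpand : dist p (c + t • v) ^ 2 = dist p c ^ 2 - t * (2 * ⟪p - c, v⟫ - t * ‖v‖ ^ 2) := by
    rw [dist_eq_norm, dist_eq_norm, show p - (c + t • v) = (p - c) - t • v by abel,
      norm_sub_sq_real, real_inner_smul_right, norm_smul, Real.norm_eq_abs, abs_of_pos htpos]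
    ring
  refine lt_of_pow_lt_pow_left₀ 2 (dist_nonneg.trans hp) ?_
  rw [hexpand]
  nlinarith [pow_le_pow_left₀ dist_nonneg hp 2, mul_pos htpos (sub_pos.2 ht)]

lemma exists_dist_eq_sup'_and_inner_nonpos {σ : Finset E} (hσ : σ.Nonempty)
    {c : E} (hc : ∀ x, σ.sup' hσ (dist · c) ≤ σ.sup' hσ (dist · x)) (v : E) :
    ∃ p ∈ σ, dist p c = σ.sup' hσ (dist · c) ∧ ⟪p - c, v⟫ ≤ 0 := by
  by_contra! h
  have hcloser : ∀ᶠ t in 𝓝[>] (0 : ℝ), ∀ p ∈ σ, dist p (c + t • v) < σ.sup' hσ (dist · c) := by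
    rw [eventually_all_finset]
    intro p hp
    rcases (le_sup' (dist · c) hp).lt_or_eq with hlt | heq
    · exact nhdsWithin_le_nhds (eventually_dist_add_smul_lt_of_dist_lt v hlt)
    · exact eventually_dist_add_smul_lt_of_inner_pos heq.le (h p hp heq)
  obtain ⟨t, ht⟩ := hcloser.exists
  exact (hc (c + t • v)).not_gt ((sup'_lt_iff hσ).2 ht)

theorem exists_forall_dist_le_sqrt_two_mul [ProperSpace E] (σ : Finset E) {α : ℝ}
    (h : ∀ p ∈ σ, ∀ q ∈ σ, dist p q ≤ 2 * α) : ∃ c, ∀ p ∈ σ, dist p c ≤ √2 * α := by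
  rcases σ.eq_empty_or_nonempty with rfl | hσ
  · exact ⟨0, by simp⟩
  obtain ⟨c, hc⟩ := exists_forall_sup'_dist_le σ hσ
  obtain ⟨q, hq, hqr⟩ := exists_mem_eq_sup' hσ (dist · c)
  obtain ⟨p, hp, hpr, hpq⟩ := exists_dist_eq_sup'_and_inner_nonpos hσ hc (q - c)
  set r := σ.sup' hσ (dist · c)
  have hα : 0 ≤ α := by linarith [h q hq q hq, dist_self q]
  have hr : 2 * r ^ 2 ≤ (2 * α) ^ 2 :=
    calc 2 * r ^ 2 = dist p c ^ 2 + dist q c ^ 2 := by rw [hpr, ← hqr]; ring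
      _ ≤ dist p q ^ 2 := dist_sq_add_dist_sq_le_of_inner_nonpos hpq
      _ ≤ (2 * α) ^ 2 := pow_le_pow_left₀ dist_nonneg (h p hp q hq) 2
  refine ⟨c, fun x hx => (le_sup' (dist · c) hx).trans ?_⟩
  refine le_of_pow_le_pow_left₀ two_ne_zero (by positivity) ?_
  rw [mul_pow, Real.sq_sqrt zero_le_two]
  linarith

end InnerProductSpace

lemma rad_le_of_forall_dist_le {d : ℕ} {S : Set (EuclideanSpace ℝ (Fin d))}
    {c : EuclideanSpace ℝ (Fin d)} {r : ℝ} (hr : 0 ≤ r) (h : ∀ p ∈ S, dist p c ≤ r) :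
    rad S ≤ r := by
  have hbdd : BddBelow (Set.range fun x => sSup ((fun p => dist p x) '' S)) := by
    refine ⟨0, ?_⟩
    rintro _ ⟨x, rfl⟩
    exact Real.sSup_nonneg (by rintro _ ⟨p, -, rfl⟩; exact dist_nonneg)
  exact (ciInf_le hbdd c).trans (Real.sSup_le (by rintro _ ⟨p, hp, rfl⟩; exact h p hp) hr)

theorem vietoris_rips_lemma_general (d : ℕ)
    (α : ℝ) (hα : 0 ≤ α)
    (σ : Finset (EuclideanSpace ℝ (Fin d)))
    (hdiam : Metric.diam (σ : Set (EuclideanSpace ℝ (Fin d))) ≤ 2 * α) :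
    rad (σ : Set (EuclideanSpace ℝ (Fin d))) ≤ Real.sqrt 2 * α := by
  obtain ⟨c, hc⟩ := exists_forall_dist_le_sqrt_two_mul σ fun p hp q hq =>
    (Metric.dist_le_diam_of_mem σ.finite_toSet.isBounded hp hq).trans hdiam
  exact rad_le_of_forall_dist_le (by positivity) hc

theorem vietoris_rips_lemma (d : ℕ)
    (S : Finset (EuclideanSpace ℝ (Fin d))) (α : ℝ) (hα : 0 ≤ α)
    (σ : Finset (EuclideanSpace ℝ (Fin d))) (hσS : σ ⊆ S) (hσ : σ.Nonempty)
    (hdiam : Metric.diam (σ : Set (EuclideanSpace ℝ (Fin d))) ≤ 2 * α) :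
    rad (σ : Set (EuclideanSpace ℝ (Fin d))) ≤ Real.sqrt 2 * α :=
  vietoris_rips_lemma_general d α hα σ hdiam
end

section
/- Assume the radius-coreset theorem: every finite P ⊆ R^d has a subset C with |C| ≤ δ := ⌈1/(2ε+ε²)+1⌉ and rad(P) ≤ (1+ε)·rad(C). Define the (δ−1)-completion M of the Čech complex C_α(S) as the set of σ ⊆ S such that every subset τ ⊆ σ with |τ| ≤ δ satisfies rad(τ) ≤ α. Then C_α(S) ⊆ M ⊆ C_{(1+ε)α}(S). -/
section Radius

variable {d : ℕ}

lemma rad_empty : rad (∅ : Set (EuclideanSpace ℝ (Fin d))) = 0 := by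
  simp [rad]

lemma rad_mono {s t : Set (EuclideanSpace ℝ (Fin d))} (hs : s.Nonempty)
    (ht : Bornology.IsBounded t) (hst : s ⊆ t) : rad s ≤ rad t := by
  refine ciInf_mono ⟨0, ?_⟩ fun x => ?_
  · rintro _ ⟨x, rfl⟩
    exact Real.sSup_nonneg fun _ ⟨_, _, hr⟩ => hr ▸ dist_nonneg
  · exact csSup_le_csSup ((LipschitzWith.dist_left x).isBounded_image ht).bddAbove
      (hs.image _) (Set.image_mono hst)

end Radius

theorem completion_interleaves_cech_general
    (d : ℕ) (S : Finset (EuclideanSpace ℝ (Fin d)))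
    (ε : ℝ) (hε : 0 < ε) (α : ℝ) (hα : 0 ≤ α)
    (δ : ℕ)
    (hcoreset : ∀ P : Finset (EuclideanSpace ℝ (Fin d)), P.Nonempty →
      ∃ C ⊆ P, C.card ≤ δ ∧
        rad (P : Set (EuclideanSpace ℝ (Fin d)))
          ≤ (1 + ε) * rad (C : Set (EuclideanSpace ℝ (Fin d)))) :
    (∀ σ : Finset (EuclideanSpace ℝ (Fin d)), σ ⊆ S → σ.Nonempty →
      rad (σ : Set (EuclideanSpace ℝ (Fin d))) ≤ α →
      (∀ τ ⊆ σ, τ.Nonempty → τ.card ≤ δ →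
        rad (τ : Set (EuclideanSpace ℝ (Fin d))) ≤ α)) ∧
    (∀ σ : Finset (EuclideanSpace ℝ (Fin d)), σ ⊆ S → σ.Nonempty →
      (∀ τ ⊆ σ, τ.Nonempty → τ.card ≤ δ →
        rad (τ : Set (EuclideanSpace ℝ (Fin d))) ≤ α) →
      rad (σ : Set (EuclideanSpace ℝ (Fin d))) ≤ (1 + ε) * α) := by
  refine ⟨fun σ _ _ hσ τ hτσ hτ _ => ?_, fun σ _ hσ hsmall => ?_⟩
  · exact (rad_mono (Finset.coe_nonempty.2 hτ) σ.finite_toSet.isBounded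
      (Finset.coe_subset.2 hτσ)).trans hσ
  · obtain ⟨C, hCσ, hCcard, hσC⟩ := hcoreset σ hσ
    have hC : rad (C : Set (EuclideanSpace ℝ (Fin d))) ≤ α := by
      rcases C.eq_empty_or_nonempty with rfl | hCne
      · simpa only [Finset.coe_empty, rad_empty] using hα
      · exact hsmall C hCσ hCne hCcard
    calc rad (σ : Set (EuclideanSpace ℝ (Fin d)))
        ≤ (1 + ε) * rad (C : Set (EuclideanSpace ℝ (Fin d))) := hσC
      _ ≤ (1 + ε) * α := by gcongr

theorem completion_interleaves_cech
    (d : ℕ) (S : Finset (EuclideanSpace ℝ (Fin d)))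
    (ε : ℝ) (hε : 0 < ε) (α : ℝ) (hα : 0 ≤ α)
    (δ : ℕ) (hδ : (δ : ℝ) = ⌈1 / (2 * ε + ε ^ 2) + 1⌉)
    (hcoreset : ∀ P : Finset (EuclideanSpace ℝ (Fin d)), P.Nonempty →
      ∃ C ⊆ P, C.card ≤ δ ∧
        rad (P : Set (EuclideanSpace ℝ (Fin d)))
          ≤ (1 + ε) * rad (C : Set (EuclideanSpace ℝ (Fin d)))) :
    (∀ σ : Finset (EuclideanSpace ℝ (Fin d)), σ ⊆ S → σ.Nonempty →
      rad (σ : Set (EuclideanSpace ℝ (Fin d))) ≤ α →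
      (∀ τ ⊆ σ, τ.Nonempty → τ.card ≤ δ →
        rad (τ : Set (EuclideanSpace ℝ (Fin d))) ≤ α)) ∧
    (∀ σ : Finset (EuclideanSpace ℝ (Fin d)), σ ⊆ S → σ.Nonempty →
      (∀ τ ⊆ σ, τ.Nonempty → τ.card ≤ δ →
        rad (τ : Set (EuclideanSpace ℝ (Fin d))) ≤ α) →
      rad (σ : Set (EuclideanSpace ℝ (Fin d))) ≤ (1 + ε) * α) :=
  completion_interleaves_cech_general d S ε hε α hα δ hcoreset
end

section
/- Let T ⊆ R^d be the convex hull of d+1 points all lying on a sphere of radius r centered at c, such that c ∈ T. If B ⊆ T is the largest ball centered at c contained in T, then the radius of B is at most r/d. -/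
/-!
Write `c = ∑ wᵢ Pᵢ` as a convex combination and pick `j` with `w_j ≤ 1/(d+1)`. The other `d`
points lie on an affine hyperplane `⟪u, ·⟫ = a` with `‖u‖ = 1`, oriented so that
`b := ⟪u, P_j⟫ ≥ a`. Then `⟪u, c⟫ = a + w_j (b - a)`. The simplex lies in `⟪u, ·⟫ ≥ a`, so the
ball forces `s ≤ ⟪u, c⟫ - a = w_j (b - a)`, while `(1 - w_j)(b - a) = ⟪u, P_j - c⟫ ≤ r`. Hence
`s ≤ r w_j / (1 - w_j) ≤ r / d`.
-/

open Finset
open scoped RealInnerProductSpace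

theorem mem_convexHull_range_iff_exists_weights {R ι E : Type*} [Field R] [LinearOrder R]
    [IsStrictOrderedRing R] [Fintype ι] [AddCommGroup E] [Module R E] {v : ι → E} {x : E} :
    x ∈ convexHull R (Set.range v) ↔
      ∃ w : ι → R, (∀ i, 0 ≤ w i) ∧ ∑ i, w i = 1 ∧ ∑ i, w i • v i = x := by
  classical
  have hv : Set.range v = Fintype.linearCombination R v '' Set.range fun i ↦ Pi.single i 1 := by
    rw [← Set.range_comp]; congr 1; ext i; simp [Fintype.linearCombination_apply, Pi.single_apply]
  rw [hv, ← LinearMap.image_convexHull, convexHull_rangle_single_eq_stdSimplex]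
  simp [stdSimplex, Fintype.linearCombination_apply, and_assoc]

section InnerProductSpace

variable {E : Type*} [NormedAddCommGroup E] [InnerProductSpace ℝ E]

theorem add_le_inner_of_closedBall_subset_convexHull {S : Set E} {u c : E} {a s : ℝ}
    (hu : ‖u‖ = 1) (hs : 0 ≤ s) (hS : ∀ x ∈ S, a ≤ ⟪u, x⟫)
    (hball : Metric.closedBall c s ⊆ convexHull ℝ S) : a + s ≤ ⟪u, c⟫ := by
  have hhalf : convexHull ℝ S ⊆ {x | a ≤ ⟪u, x⟫} :=
    convexHull_min hS (convex_halfSpace_ge (innerₛₗ ℝ u).isLinear a)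
  have hmem : c - s • u ∈ Metric.closedBall c s := by
    simp [norm_smul, hu, abs_of_nonneg hs]
  have := hhalf (hball hmem)
  simp only [Set.mem_ofPred_eq, inner_sub_right, real_inner_smul_right, real_inner_self_eq_norm_sq,
    hu] at this
  linarith

theorem inner_sum_smul_eq_of_forall_ne {ι : Type*} [Fintype ι] [DecidableEq ι]
    {p : ι → E} {w : ι → ℝ} {u : E} {a : ℝ} {j : ι}
    (hw : ∑ i, w i = 1) (hp : ∀ i ≠ j, ⟪u, p i⟫ = a) :
    ⟪u, ∑ i, w i • p i⟫ = a + w j * (⟪u, p j⟫ - a) := by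
  calc ⟪u, ∑ i, w i • p i⟫ = a + ∑ i, w i * (⟪u, p i⟫ - a) := by
        simp [inner_sum, real_inner_smul_right, mul_sub, ← Finset.sum_mul, hw]
    _ = a + w j * (⟪u, p j⟫ - a) := by
        rw [Fintype.sum_eq_single j fun i hi ↦ by rw [hp i hi, sub_self, mul_zero]]

variable [FiniteDimensional ℝ E]

theorem exists_unit_inner_eq_on_of_card_le_finrank {ι : Type*} (p : ι → E) (s : Finset ι)
    (hs : #s ≤ Module.finrank ℝ E) (hne : s.Nonempty) :
    ∃ u : E, ‖u‖ = 1 ∧ ∃ a, ∀ i ∈ s, ⟪u, p i⟫ = a := by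
  classical
  let V := vectorSpan ℝ (s.image p : Set E)
  have hcard := hne.card_pos
  have hrank : Module.finrank ℝ V ≤ #s - 1 :=
    finrank_vectorSpan_image_finset_le ℝ p s (by omega)
  have hV : V ≠ ⊤ := fun htop ↦ by
    rw [htop, finrank_top] at hrank
    omega
  obtain ⟨v, hvV, hv⟩ := Submodule.exists_mem_ne_zero_of_ne_bot
    (mt Submodule.orthogonal_eq_bot_iff.mp hV)
  obtain ⟨k, hk⟩ := hne
  refine ⟨‖v‖⁻¹ • v, by simp [norm_smul, hv], ⟪‖v‖⁻¹ • v, p k⟫, fun i hi ↦ ?_⟩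
  have hsub : p i - p k ∈ V :=
    vsub_mem_vectorSpan ℝ (mem_image_of_mem p hi) (mem_image_of_mem p hk)
  have := Submodule.inner_right_of_mem_orthogonal hsub (Submodule.smul_mem _ ‖v‖⁻¹ hvV)
  rw [real_inner_comm, inner_sub_right] at this
  linarith

theorem exists_unit_inner_eq_of_ne_and_le {ι : Type*} [Fintype ι] [Nontrivial ι]
    (p : ι → E) (j : ι) (hcard : Fintype.card ι ≤ Module.finrank ℝ E + 1) :
    ∃ u : E, ‖u‖ = 1 ∧ ∃ a, (∀ i ≠ j, ⟪u, p i⟫ = a) ∧ a ≤ ⟪u, p j⟫ := by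
  classical
  obtain ⟨k, hk⟩ := exists_ne j
  obtain ⟨u, hu, a, ha⟩ := exists_unit_inner_eq_on_of_card_le_finrank p (univ.erase j)
    (by rw [card_erase_of_mem (mem_univ j), card_univ]; omega) ⟨k, mem_erase.2 ⟨hk, mem_univ k⟩⟩
  have hoff : ∀ i ≠ j, ⟪u, p i⟫ = a := fun i hi ↦ ha i (mem_erase.2 ⟨hi, mem_univ i⟩)
  rcases le_total a ⟪u, p j⟫ with hj | hj
  · exact ⟨u, hu, a, hoff, hj⟩
  · refine ⟨-u, by rw [norm_neg, hu], -a, fun i hi ↦ ?_, ?_⟩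
    · rw [inner_neg_left, hoff i hi]
    · rwa [inner_neg_left, neg_le_neg_iff]

end InnerProductSpace

theorem inradius_le_circumradius_div_dim_general
    (d : ℕ) (hd : 1 ≤ d)
    (P : Fin (d + 1) → EuclideanSpace ℝ (Fin d))
    (c : EuclideanSpace ℝ (Fin d)) (r : ℝ)
    (hsphere : ∀ i, dist (P i) c = r)
    (hc : c ∈ convexHull ℝ (Set.range P)) :
    ∀ s : ℝ, 0 ≤ s →
      Metric.closedBall c s ⊆ convexHull ℝ (Set.range P) → s ≤ r / d := by
  intro s hs hball
  obtain ⟨w, hw₀, hw₁, rfl⟩ := mem_convexHull_range_iff_exists_weights.1 hc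
  obtain ⟨j, -, hj⟩ : ∃ j ∈ univ, w j ≤ 1 / (d + 1) :=
    exists_le_of_sum_le univ_nonempty (by simp [hw₁, field])
  have : Nontrivial (Fin (d + 1)) := Fin.nontrivial_iff_two_le.2 (by omega)
  obtain ⟨u, hu, a, hoff, hab⟩ := exists_unit_inner_eq_of_ne_and_le P j (by simp)
  have hlow : a + s ≤ ⟪u, ∑ i, w i • P i⟫ := by
    refine add_le_inner_of_closedBall_subset_convexHull hu hs ?_ hball
    rintro _ ⟨i, rfl⟩
    by_cases hi : i = j
    · exact hi ▸ hab
    · exact (hoff i hi).ge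
  have hup : ⟪u, P j⟫ - ⟪u, ∑ i, w i • P i⟫ ≤ r := by
    simpa [← inner_sub_right, hu, ← dist_eq_norm, hsphere j] using
      real_inner_le_norm u (P j - ∑ i, w i • P i)
  rw [inner_sum_smul_eq_of_forall_ne hw₁ hoff] at hlow hup
  have hd' : (1 : ℝ) ≤ d := by exact_mod_cast hd
  rw [le_div_iff₀ (by positivity)]
  rw [le_div_iff₀ (by positivity)] at hj
  nlinarith [hw₀ j, sub_nonneg.2 hab]

theorem inradius_le_circumradius_div_dim
    (d : ℕ) (hd : 1 ≤ d)
    (P : Fin (d + 1) → EuclideanSpace ℝ (Fin d))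
    (c : EuclideanSpace ℝ (Fin d)) (r : ℝ) (hr : 0 < r)
    (hsphere : ∀ i, dist (P i) c = r)
    (hc : c ∈ convexHull ℝ (Set.range P)) :
    ∀ s : ℝ, 0 ≤ s →
      Metric.closedBall c s ⊆ convexHull ℝ (Set.range P) → s ≤ r / d :=
  inradius_le_circumradius_div_dim_general d hd P c r hsphere hc
end
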